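/- Let K be an absorptive, fully-continuous commutative semiring. Then for all a, b ∈ K: (a + b)^∞ = a^∞ + (a + b)^∞ · b, where x^∞ := ⨅_{n ∈ ℕ} x^n is the infinitary power. -/
import Mathlib


/-- An absorptive, fully-continuous commutative semiring: a commutative semiring
whose natural order (`a ≤ b ↔ a + b = b`) is a complete lattice, with `1 + a = 1`,
and such that addition and multiplication commute with suprema and infima of
nonempty chains. -/
class AbsorptiveFC (K : Type*) extends CommSemiring K, CompleteLattice K where
  absorb : ∀ a : K, 1 + a = 1
  le_iff_add : ∀ a b : K, a ≤ b ↔ a + b = b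
  add_sSup_chain : ∀ (a : K) (C : Set K), C.Nonempty → IsChain (· ≤ ·) C →
    a + sSup C = sSup ((fun c => a + c) '' C)
  add_sInf_chain : ∀ (a : K) (C : Set K), C.Nonempty → IsChain (· ≤ ·) C →
    a + sInf C = sInf ((fun c => a + c) '' C)
  mul_sSup_chain : ∀ (a : K) (C : Set K), C.Nonempty → IsChain (· ≤ ·) C →
    a * sSup C = sSup ((fun c => a * c) '' C)
  mul_sInf_chain : ∀ (a : K) (C : Set K), C.Nonempty → IsChain (· ≤ ·) C →
    a * sInf C = sInf ((fun c => a * c) '' C)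

/-- The infinitary power `a^∞ = ⨅ n, a ^ n`. -/
noncomputable def ipow {K : Type*} [AbsorptiveFC K] (a : K) : K := ⨅ n : ℕ, a ^ n

section Aux
variable {K : Type*} [AbsorptiveFC K]

lemma afc_le_iff {a b : K} : a ≤ b ↔ a + b = b := AbsorptiveFC.le_iff_add a b

lemma afc_add_idem (a : K) : a + a = a := by
  have h1 : (1 : K) + 1 = 1 := AbsorptiveFC.absorb 1
  calc a + a = a * (1 + 1) := by ring
    _ = a := by rw [h1, mul_one]

lemma afc_le_one (a : K) : a ≤ 1 := by
  rw [afc_le_iff, add_comm]; exact AbsorptiveFC.absorb a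

lemma afc_add_le_add {a b c d : K} (h1 : a ≤ b) (h2 : c ≤ d) : a + c ≤ b + d := by
  rw [afc_le_iff] at *
  calc a + c + (b + d) = (a + b) + (c + d) := by ring
    _ = b + d := by rw [h1, h2]

lemma afc_mul_le_mul_left {a b : K} (c : K) (h : a ≤ b) : c * a ≤ c * b := by
  rw [afc_le_iff] at *; rw [← mul_add, h]

lemma afc_mul_le_mul_right {a b : K} (c : K) (h : a ≤ b) : a * c ≤ b * c := by
  rw [mul_comm a c, mul_comm b c]; exact afc_mul_le_mul_left c h

lemma afc_pow_antitone (a : K) : Antitone (fun n => a ^ n) := by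
  apply antitone_nat_of_succ_le
  intro n
  have h := afc_mul_le_mul_left (a ^ n) (afc_le_one a)
  simpa [pow_succ] using h

lemma afc_pow_le_pow {a b : K} (h : a ≤ b) (n : ℕ) : a ^ n ≤ b ^ n := by
  induction n with
  | zero => simp
  | succ n ih =>
    rw [pow_succ, pow_succ]
    exact le_trans (afc_mul_le_mul_right a ih) (afc_mul_le_mul_left (b ^ n) h)

lemma afc_range_chain {f : ℕ → K} (hf : Antitone f) : IsChain (· ≤ ·) (Set.range f) := by
  rintro _ ⟨m, rfl⟩ _ ⟨n, rfl⟩ _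
  rcases le_total m n with h | h
  · exact Or.inr (hf h)
  · exact Or.inl (hf h)

lemma afc_add_iInf (a : K) {f : ℕ → K} (hf : Antitone f) :
    a + ⨅ n, f n = ⨅ n, (a + f n) := by
  have h := AbsorptiveFC.add_sInf_chain a (Set.range f) (Set.range_nonempty f)
    (afc_range_chain hf)
  rw [← Set.range_comp] at h
  simpa [iInf, Function.comp_def] using h

lemma afc_iInf_mul (b : K) {f : ℕ → K} (hf : Antitone f) :
    (⨅ n, f n) * b = ⨅ n, f n * b := by
  have h := AbsorptiveFC.mul_sInf_chain b (Set.range f) (Set.range_nonempty f)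
    (afc_range_chain hf)
  rw [← Set.range_comp] at h
  rw [mul_comm]
  simp only [iInf] at h ⊢
  rw [h]
  congr 1
  ext x
  simp [Function.comp_def, mul_comm]

lemma afc_iInf_add_iInf {f g : ℕ → K} (hf : Antitone f) (hg : Antitone g) :
    ⨅ n, (f n + g n) = (⨅ n, f n) + (⨅ n, g n) := by
  apply le_antisymm
  · have h1 : ∀ m, (⨅ n, (f n + g n)) ≤ f m + ⨅ n, g n := by
      intro m
      rw [afc_add_iInf (f m) hg]
      refine le_iInf fun n => ?_
      exact le_trans (iInf_le _ (max m n))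
        (afc_add_le_add (hf (le_max_left m n)) (hg (le_max_right m n)))
    calc (⨅ n, (f n + g n)) ≤ ⨅ m, (f m + ⨅ n, g n) := le_iInf h1
      _ = (⨅ n, f n) + ⨅ n, g n := by
          rw [add_comm (⨅ n, f n), afc_add_iInf _ hf]
          simp [add_comm]
  · exact le_iInf fun n => afc_add_le_add (iInf_le _ n) (iInf_le _ n)

lemma afc_iInf_succ {f : ℕ → K} (hf : Antitone f) : ⨅ n, f (n + 1) = ⨅ n, f n :=
  le_antisymm (le_iInf fun n => le_trans (iInf_le _ n) (hf (Nat.le_succ n)))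
    (le_iInf fun n => iInf_le _ (n + 1))

lemma afc_key (a b : K) (n : ℕ) : (a + b) ^ (n + 1) = a ^ (n + 1) + (a + b) ^ n * b := by
  induction n with
  | zero => simp
  | succ n ih =>
    have hle : b * a ^ (n + 1) ≤ (a + b) ^ (n + 1) * b := by
      rw [mul_comm]
      exact afc_mul_le_mul_right b
        (afc_pow_le_pow (by rw [afc_le_iff, ← add_assoc, afc_add_idem]) (n + 1))
    have hle' := afc_le_iff.mp hle
    calc (a + b) ^ (n + 2) = (a + b) * ((a + b) ^ (n + 1)) := by ring
      _ = (a + b) * (a ^ (n + 1) + (a + b) ^ n * b) := by rw [ih]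
      _ = a ^ (n + 2) + (b * a ^ (n + 1) + (a + b) ^ (n + 1) * b) := by ring
      _ = a ^ (n + 2) + (a + b) ^ (n + 1) * b := by rw [hle']

end Aux

/-- in an absorptive, fully-continuous commutative semiring,
`(a+b)^∞ = a^∞ + (a+b)^∞ · b`. -/
theorem ipow_add_split {K : Type*} [AbsorptiveFC K] (a b : K) :
    ipow (a + b) = ipow a + ipow (a + b) * b := by
  have hs : Antitone (fun n => (a + b) ^ n) := afc_pow_antitone (a + b)
  have ha : Antitone (fun n => a ^ n) := afc_pow_antitone a
  have ha' : Antitone (fun n => a ^ (n + 1)) :=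
    fun m n h => ha (Nat.succ_le_succ h)
  have hsb : Antitone (fun n => (a + b) ^ n * b) :=
    fun m n h => afc_mul_le_mul_right b (hs h)
  unfold ipow
  calc ⨅ n, (a + b) ^ n = ⨅ n, (a + b) ^ (n + 1) := (afc_iInf_succ hs).symm
    _ = ⨅ n, (a ^ (n + 1) + (a + b) ^ n * b) := by
        exact iInf_congr fun n => afc_key a b n
    _ = (⨅ n, a ^ (n + 1)) + ⨅ n, (a + b) ^ n * b := afc_iInf_add_iInf ha' hsb
    _ = (⨅ n, a ^ n) + (⨅ n, (a + b) ^ n) * b := by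
        rw [afc_iInf_succ ha, afc_iInf_mul b hs]
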